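/- arXiv:2509.21716 — 5 statements merged into one kernel-verified Lean document; each statement's English description precedes it below -/
import Mathlib

section
/- Stronger propagation result: for Jacobi iterations x_{t+1}^{(i+1)} = f_{t+1}(x_t^{(i)}) with fixed x_0 = x₀, after i iterations the first i entries of the trajectory are exact: x_t^{(i)} = x*_t for all t ≤ i, where x* is the sequential roll-out. -/
/-- Propagation result for Jacobi iterations: after `i` iterations, the first `i`
entries of the trajectory are exact. -/
theorem jacobi_propagation
    (D : ℕ) (f : ℕ → (Fin D → ℝ) → (Fin D → ℝ)) (x₀ : Fin D → ℝ)
    (x : ℕ → ℕ → Fin D → ℝ)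
    (hinit : ∀ i, x i 0 = x₀)
    (hjac : ∀ i t, x (i + 1) (t + 1) = f (t + 1) (x i t))
    (xstar : ℕ → Fin D → ℝ)
    (hstar0 : xstar 0 = x₀)
    (hstar : ∀ t, xstar (t + 1) = f (t + 1) (xstar t)) :
    ∀ i t, t ≤ i → x i t = xstar t := by
  intro i
  induction i with
  | zero => intro t ht; simp at ht; subst ht; rw [hinit, hstar0]
  | succ i ih =>
    intro t ht
    cases t with
    | zero => rw [hinit, hstar0]
    | succ t => rw [hjac, hstar, ih t (by omega)]
end

section
/- Any fixed-point iteration of the common LDS form x_{t+1}^{(i+1)} = f_{t+1}(x_t^{(i)}) + A_{t+1}^{(i)}(x_t^{(i+1)} - x_t^{(i)}), where the matrices A_{t+1}^{(i)} may depend on the iterate, converges to the exact sequential roll-out in at most T iterations: x_t^{(T)} = x*_t for all t ∈ {1,...,T}. More precisely, after i iterations, x_t^{(i)} = x*_t for all t ≤ i. -/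
/-- Any fixed-point iteration of the common LDS form (with iterate-dependent
transition matrices) converges to the exact roll-out in at most `T` iterations;
more precisely, after `i` iterations the first `i` entries are exact. -/
theorem lds_fixed_point_converges_in_T_iterations
    (D T : ℕ) (f : ℕ → (Fin D → ℝ) → (Fin D → ℝ)) (x₀ : Fin D → ℝ)
    (A : ℕ → ℕ → Matrix (Fin D) (Fin D) ℝ)
    (x : ℕ → ℕ → Fin D → ℝ)
    (hinit : ∀ i, x i 0 = x₀)
    (hiter : ∀ i t, x (i + 1) (t + 1) =
      f (t + 1) (x i t) + (A i (t + 1)).mulVec (x (i + 1) t - x i t))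
    (xstar : ℕ → Fin D → ℝ)
    (hstar0 : xstar 0 = x₀)
    (hstar : ∀ t, xstar (t + 1) = f (t + 1) (xstar t)) :
    (∀ i t, t ≤ i → x i t = xstar t) ∧
    (∀ t, 1 ≤ t → t ≤ T → x T t = xstar t) := by
  have H : ∀ t i, t ≤ i → x i t = xstar t := by
    intro t
    induction t with
    | zero => intro i _; rw [hinit, hstar0]
    | succ t ih =>
      intro i hti
      obtain ⟨j, rfl⟩ : ∃ j, i = j + 1 := ⟨i - 1, by omega⟩
      have htj : t ≤ j := by omega
      rw [hiter, ih j htj, ih (j + 1) (by omega), sub_self, Matrix.mulVec_zero,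
        add_zero, hstar]
  exact ⟨fun i t h => H t i h, fun t _ h => H t T h⟩
end

section
/- The Newton fixed-point iteration for the sequential-evaluation root-finding problem F(x) = 0 coincides with the parallel-chord update with T = ∂F/∂x: that is, x^{(i+1)} = x^{(i)} - (∂F/∂x(x^{(i)}))^{-1} F(x^{(i)}) holds componentwise if and only if x_{t+1}^{(i+1)} = f_{t+1}(x_t^{(i)}) + J_{t+1}(x_t^{(i)})(x_t^{(i+1)} - x_t^{(i)}) for all t, where J_{t+1} is the Jacobian of f_{t+1}. -/
open Matrix

/-- The Newton fixed-point iteration for the sequential-evaluation root-finding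
problem `F(x) = 0`, `F_{t+1}(x) = x_{t+1} - f_{t+1}(x_t)`, coincides with the
parallel-chord update with `T = ∂F/∂x`: the stacked update
`x⁽ⁱ⁺¹⁾ = x⁽ⁱ⁾ - (∂F/∂x(x⁽ⁱ⁾))⁻¹ F(x⁽ⁱ⁾)` holds iff the componentwise linear
recursion `xn (t+1) = f (t+1) (xp t) + J (t+1) (xp t) *ᵥ (xn t - xp t)` holds.
Here the block index `r : Fin T` corresponds to time `r + 1`. -/
theorem newton_iff_parallel_chord
    (T D : ℕ)
    (f : ℕ → (Fin D → ℝ) → (Fin D → ℝ))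
    (J : ℕ → (Fin D → ℝ) → Matrix (Fin D) (Fin D) ℝ)
    -- `J (t+1) x` is the Jacobian of `f (t+1)` at `x`:
    (hJ : ∀ t x, HasFDerivAt (f (t + 1))
      (LinearMap.toContinuousLinearMap (Matrix.mulVecLin (J (t + 1) x))) x)
    (x₀ : Fin D → ℝ) (xp xn : ℕ → Fin D → ℝ)
    (hxp0 : xp 0 = x₀) (hxn0 : xn 0 = x₀)
    -- `B = ∂F/∂x (xp)`, block lower bidiagonal with identity diagonal blocks
    -- and subdiagonal blocks `-J (t+1) (xp t)`:
    (B : Matrix (Fin T × Fin D) (Fin T × Fin D) ℝ)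
    (hBdiag : ∀ (t : Fin T) (i j : Fin D),
      B (t, i) (t, j) = if i = j then 1 else 0)
    (hBsub : ∀ (t₁ t₂ : Fin T) (i j : Fin D), (t₁ : ℕ) = (t₂ : ℕ) + 1 →
      B (t₁, i) (t₂, j) = -(J ((t₁ : ℕ) + 1) (xp (t₁ : ℕ)) i j))
    (hBzero : ∀ (t₁ t₂ : Fin T) (i j : Fin D),
      (t₁ : ℕ) ≠ (t₂ : ℕ) → (t₁ : ℕ) ≠ (t₂ : ℕ) + 1 → B (t₁, i) (t₂, j) = 0)
    (hB : IsUnit B) :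
    ((fun q : Fin T × Fin D => xn ((q.1 : ℕ) + 1) q.2) =
      (fun q : Fin T × Fin D => xp ((q.1 : ℕ) + 1) q.2) -
        B⁻¹.mulVec (fun q : Fin T × Fin D =>
          xp ((q.1 : ℕ) + 1) q.2 - f ((q.1 : ℕ) + 1) (xp (q.1 : ℕ)) q.2))
    ↔ (∀ t, t < T → xn (t + 1) =
        f (t + 1) (xp t) + (J (t + 1) (xp t)).mulVec (xn t - xp t)) := by

  have hBdet : IsUnit B.det := (Matrix.isUnit_iff_isUnit_det B).mp hB
  set u : ℕ → Fin D → ℝ := fun s => xp s - xn s with hu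
  have hu0 : u 0 = 0 := by simp [hu, hxp0, hxn0]
  have row : ∀ (t : Fin T) (i : Fin D),
      (B *ᵥ fun q : Fin T × Fin D => u ((q.1 : ℕ) + 1) q.2) (t, i)
        = u ((t : ℕ) + 1) i - ((J ((t : ℕ) + 1) (xp (t : ℕ))) *ᵥ (u (t : ℕ))) i := by
    intro t i
    rw [Matrix.mulVec, dotProduct, Fintype.sum_prod_type]
    cases ht : (t : ℕ) with
    | zero =>
      rw [Finset.sum_eq_single t]
      · have : ∀ j, B (t, i) (t, j) * u ((t : ℕ) + 1) j
            = (if i = j then u ((t : ℕ) + 1) j else 0) := by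
          intro j; rw [hBdiag]; split <;> simp
        simp only [this, Finset.sum_ite_eq, Finset.mem_univ, if_true]
        rw [ht, hu0]
        simp
      · intro s _ hst
        apply Finset.sum_eq_zero
        intro j _
        rw [hBzero _ _ _ _ (fun h => hst (Fin.ext h.symm)) (by omega), zero_mul]
      · intro h; exact absurd (Finset.mem_univ t) h
    | succ v =>
      have hvT : v < T := by have := t.isLt; omega
      set s : Fin T := ⟨v, hvT⟩ with hs
      have hts : t ≠ s := by
        intro h
        have : (t : ℕ) = v := by rw [h]
        omega
      have hsub : ({t, s} : Finset (Fin T)) ⊆ Finset.univ := Finset.subset_univ _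
      rw [← Finset.sum_subset hsub, Finset.sum_pair hts]
      · have h1 : ∑ j, B (t, i) (t, j) * u ((t : ℕ) + 1) j = u ((t : ℕ) + 1) i := by
          have : ∀ j, B (t, i) (t, j) * u ((t : ℕ) + 1) j
              = (if i = j then u ((t : ℕ) + 1) j else 0) := by
            intro j; rw [hBdiag]; split <;> simp
          simp only [this, Finset.sum_ite_eq, Finset.mem_univ, if_true]
        have h2 : ∑ j, B (t, i) (s, j) * u ((s : ℕ) + 1) j
            = -((J ((t : ℕ) + 1) (xp (t : ℕ))) *ᵥ (u (t : ℕ))) i := by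
          have hssub : (t : ℕ) = (s : ℕ) + 1 := by simp [hs, ht]
          rw [Matrix.mulVec, dotProduct, ← Finset.sum_neg_distrib]
          apply Finset.sum_congr rfl
          intro j _
          rw [hBsub _ _ _ _ hssub]
          have : u ((s : ℕ) + 1) j = u (t : ℕ) j := by
            congr 1
            omega
          rw [this]
          ring
        rw [h1, h2]
        rw [ht, ← sub_eq_add_neg]
      · intro s' _ hs'
        simp only [Finset.mem_insert, Finset.mem_singleton, not_or] at hs'
        apply Finset.sum_eq_zero
        intro j _
        have hne1 : (t : ℕ) ≠ (s' : ℕ) := fun h => hs'.1 (Fin.ext h).symm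
        have hne2 : (t : ℕ) ≠ (s' : ℕ) + 1 := by
          intro h
          apply hs'.2
          apply Fin.ext
          simp [hs]
          omega
        rw [hBzero _ _ _ _ hne1 hne2, zero_mul]
  set Fv : Fin T × Fin D → ℝ := fun q : Fin T × Fin D =>
    xp ((q.1 : ℕ) + 1) q.2 - f ((q.1 : ℕ) + 1) (xp (q.1 : ℕ)) q.2 with hFv
  set xnf : Fin T × Fin D → ℝ := fun q : Fin T × Fin D => xn ((q.1 : ℕ) + 1) q.2 with hxnf
  set xpf : Fin T × Fin D → ℝ := fun q : Fin T × Fin D => xp ((q.1 : ℕ) + 1) q.2 with hxpf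
  have hinvB : B⁻¹ * B = 1 := Matrix.nonsing_inv_mul B hBdet
  have hBinv : B * B⁻¹ = 1 := Matrix.mul_nonsing_inv B hBdet
  have hw : xpf - xnf = fun q : Fin T × Fin D => u ((q.1 : ℕ) + 1) q.2 := by
    funext q; simp [hu, hxpf, hxnf]
  have step1 : (xnf = xpf - B⁻¹ *ᵥ Fv) ↔ (B *ᵥ (xpf - xnf) = Fv) := by
    constructor
    · intro h
      have h2 : xpf - xnf = B⁻¹ *ᵥ Fv := by rw [h]; exact sub_sub_cancel _ _
      rw [h2, Matrix.mulVec_mulVec, hBinv, Matrix.one_mulVec]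
    · intro h
      have h2 : B⁻¹ *ᵥ Fv = xpf - xnf := by
        rw [← h, Matrix.mulVec_mulVec, hinvB, Matrix.one_mulVec]
      rw [h2]
      exact (sub_sub_cancel _ _).symm
  rw [step1, hw]
  constructor
  · intro h t htT
    funext i
    have hrow := row ⟨t, htT⟩ i
    have hcf := congrFun h (⟨t, htT⟩, i)
    rw [hrow] at hcf
    simp only [hFv] at hcf
    simp only [hu, Pi.sub_apply] at hcf
    have hm : ((J (t + 1) (xp t)) *ᵥ (xn t - xp t)) i
        = -(((J (t + 1) (xp t)) *ᵥ (xp t - xn t)) i) := by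
      rw [show xn t - xp t = -(xp t - xn t) from (neg_sub _ _).symm,
        Matrix.mulVec_neg, Pi.neg_apply]
    show xn (t + 1) i = f (t + 1) (xp t) i + ((J (t + 1) (xp t)) *ᵥ (xn t - xp t)) i
    rw [hm]
    linarith [hcf]
  · intro h
    funext q
    obtain ⟨t, i⟩ := q
    rw [row t i]
    have hrec := congrFun (h (t : ℕ) t.isLt) i
    simp only [Pi.add_apply] at hrec
    have hm : ((J ((t : ℕ) + 1) (xp (t : ℕ))) *ᵥ (xn (t : ℕ) - xp (t : ℕ))) i
        = -(((J ((t : ℕ) + 1) (xp (t : ℕ))) *ᵥ (xp (t : ℕ) - xn (t : ℕ))) i) := by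
      rw [show xn (t : ℕ) - xp (t : ℕ) = -(xp (t : ℕ) - xn (t : ℕ)) from (neg_sub _ _).symm,
        Matrix.mulVec_neg, Pi.neg_apply]
    rw [hm] at hrec
    rw [hFv, hu]
    simp only [Pi.sub_apply]
    linarith [hrec]
end

section
/- Contraction from identity-closeness: suppose each f_{t+1} : ℝ^D → ℝ^D satisfies ‖(f_{t+1}(x) - x) - (f_{t+1}(y) - y)‖ ≤ δ‖x - y‖ for all x, y (i.e., f - id is δ-Lipschitz). Then the error of Picard iteration satisfies the recursion e_{t+1}^{(i+1)} ≤ e_t^{(i+1)} + δ·e_t^{(i)}, where e_t^{(i)} := ‖x_t^{(i)} - x*_t‖; consequently e_t^{(i+1)} ≤ δ · Σ_{s=1}^{t-1} e_s^{(i)} holds for all t and i. -/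
/-- Picard error recursion under identity-closeness: if `f - id` is `δ`-Lipschitz,
then the Picard errors `e t i = ‖x i t - x* t‖` satisfy
`e (t+1) (i+1) ≤ e t (i+1) + δ * e t i`, and consequently
`e (t+1) (i+1) ≤ δ * ∑_{s=1}^{t} e s i`. -/
theorem picard_error_recursion
    (D : ℕ) (f : ℕ → (Fin D → ℝ) → (Fin D → ℝ)) (x₀ : Fin D → ℝ)
    (δ : ℝ) (hδ : 0 ≤ δ)
    (hlip : ∀ (t : ℕ) (x y : Fin D → ℝ),
      ‖(f (t + 1) x - x) - (f (t + 1) y - y)‖ ≤ δ * ‖x - y‖)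
    (x : ℕ → ℕ → Fin D → ℝ)
    (hinit : ∀ i, x i 0 = x₀)
    (hpic : ∀ i t, x (i + 1) (t + 1) = x (i + 1) t + f (t + 1) (x i t) - x i t)
    (xstar : ℕ → Fin D → ℝ)
    (hstar0 : xstar 0 = x₀)
    (hstar : ∀ t, xstar (t + 1) = f (t + 1) (xstar t)) :
    (∀ i t, ‖x (i + 1) (t + 1) - xstar (t + 1)‖ ≤
      ‖x (i + 1) t - xstar t‖ + δ * ‖x i t - xstar t‖) ∧
    (∀ i t, ‖x (i + 1) (t + 1) - xstar (t + 1)‖ ≤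
      δ * ∑ s ∈ Finset.Icc 1 t, ‖x i s - xstar s‖) := by
  have key : ∀ i t, ‖x (i + 1) (t + 1) - xstar (t + 1)‖ ≤
      ‖x (i + 1) t - xstar t‖ + δ * ‖x i t - xstar t‖ := by
    intro i t
    have hdecomp : x (i + 1) (t + 1) - xstar (t + 1) =
        (x (i + 1) t - xstar t) +
        ((f (t + 1) (x i t) - x i t) - (f (t + 1) (xstar t) - xstar t)) := by
      rw [hpic, hstar]; abel
    calc ‖x (i + 1) (t + 1) - xstar (t + 1)‖
        ≤ ‖x (i + 1) t - xstar t‖ +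
          ‖(f (t + 1) (x i t) - x i t) - (f (t + 1) (xstar t) - xstar t)‖ := by
          rw [hdecomp]; exact norm_add_le _ _
      _ ≤ ‖x (i + 1) t - xstar t‖ + δ * ‖x i t - xstar t‖ := by
          gcongr; exact hlip t _ _
  refine ⟨key, fun i t => ?_⟩
  induction t with
  | zero =>
      simp only [Finset.Icc_self, Finset.Icc_eq_empty_of_lt (by norm_num : (1:ℕ) > 0)]
      have h0 := key i 0
      rw [hinit, hinit, hstar0] at h0
      simpa using h0
  | succ t ih =>
      have h := key i (t + 1)
      have hsum : ∑ s ∈ Finset.Icc 1 (t + 1), ‖x i s - xstar s‖ =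
          (∑ s ∈ Finset.Icc 1 t, ‖x i s - xstar s‖) + ‖x i (t+1) - xstar (t+1)‖ := by
        rw [← Finset.sum_Icc_succ_top (by omega : 1 ≤ t + 1)]
      rw [hsum, mul_add]
      linarith
end

section
/- If f - id is δ-Lipschitz with δ(T-1) < 1 componentwise as above, then Picard iteration error contracts geometrically in the sup norm over the trajectory: max_{1≤t≤T} ‖x_t^{(i+1)} - x*_t‖ ≤ δ(T-1) · max_{1≤t≤T} ‖x_t^{(i)} - x*_t‖, hence Picard iterations converge to the true trajectory for any initial guess. -/
/-- If `f - id` is `δ`-Lipschitz with `δ * (T - 1) < 1`, then Picard iteration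
error contracts geometrically in the sup norm over the trajectory, and hence
Picard iterations converge to the true trajectory from any initial guess. -/
theorem picard_geometric_contraction
    (D T : ℕ) (hT : 1 ≤ T)
    (f : ℕ → (Fin D → ℝ) → (Fin D → ℝ)) (x₀ : Fin D → ℝ)
    (δ : ℝ) (hδ : 0 ≤ δ) (hcontr : δ * (T - 1 : ℝ) < 1)
    (hlip : ∀ (t : ℕ) (x y : Fin D → ℝ),
      ‖(f (t + 1) x - x) - (f (t + 1) y - y)‖ ≤ δ * ‖x - y‖)
    (x : ℕ → ℕ → Fin D → ℝ)
    (hinit : ∀ i, x i 0 = x₀)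
    (hpic : ∀ i t, x (i + 1) (t + 1) = x (i + 1) t + f (t + 1) (x i t) - x i t)
    (xstar : ℕ → Fin D → ℝ)
    (hstar0 : xstar 0 = x₀)
    (hstar : ∀ t, xstar (t + 1) = f (t + 1) (xstar t)) :
    (∀ i, ∀ t ∈ Finset.Icc 1 T,
      ‖x (i + 1) t - xstar t‖ ≤
        δ * (T - 1 : ℝ) *
          (Finset.Icc 1 T).sup' (Finset.nonempty_Icc.mpr hT)
            (fun s => ‖x i s - xstar s‖)) ∧
    (∀ t ∈ Finset.Icc 1 T,
      Filter.Tendsto (fun i => x i t) Filter.atTop (nhds (xstar t))) := by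
  have hne : (Finset.Icc 1 T).Nonempty := Finset.nonempty_Icc.mpr hT
  set M : ℕ → ℝ := fun i => (Finset.Icc 1 T).sup' hne (fun s => ‖x i s - xstar s‖)
    with hM
  have hM0 : ∀ i, 0 ≤ M i := by
    intro i
    have := Finset.le_sup' (fun s => ‖x i s - xstar s‖) (Finset.mem_Icc.mpr ⟨le_refl 1, hT⟩)
    exact le_trans (norm_nonneg _) this
  have hMle : ∀ i t, t ∈ Finset.Icc 1 T → ‖x i t - xstar t‖ ≤ M i := fun i t ht =>
    Finset.le_sup' (fun s => ‖x i s - xstar s‖) ht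
  -- key recursion
  have hstep : ∀ i t, ‖x (i + 1) (t + 1) - xstar (t + 1)‖ ≤
      ‖x (i + 1) t - xstar t‖ + δ * ‖x i t - xstar t‖ := by
    intro i t
    have : x (i + 1) (t + 1) - xstar (t + 1) =
        (x (i + 1) t - xstar t) +
          ((f (t + 1) (x i t) - x i t) - (f (t + 1) (xstar t) - xstar t)) := by
      rw [hpic, hstar]; abel
    rw [this]
    exact le_trans (norm_add_le _ _) (by gcongr; exact hlip t _ _)
  have he1 : ∀ i, ‖x (i + 1) 1 - xstar 1‖ = 0 := by
    intro i
    have : x (i + 1) 1 - xstar 1 = 0 := by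
      have h1 := hpic i 0
      rw [hinit, hinit] at h1
      rw [h1, hstar 0, hstar0]
      abel
    rw [this, norm_zero]
  have hTr : (0 : ℝ) ≤ (T : ℝ) - 1 := by
    have : (1 : ℝ) ≤ (T : ℝ) := by exact_mod_cast hT
    linarith
  have hr0 : 0 ≤ δ * ((T : ℝ) - 1) := mul_nonneg hδ hTr
  -- main bound: for 1 ≤ t ≤ T, e (i+1) t ≤ δ * (t-1) * M i
  have key : ∀ i t, 1 ≤ t → t ≤ T →
      ‖x (i + 1) t - xstar t‖ ≤ δ * ((t : ℝ) - 1) * M i := by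
    intro i t
    induction t with
    | zero => intro h; omega
    | succ t ih =>
      intro _ htT
      rcases Nat.eq_zero_or_pos t with h0 | hpos
      · subst h0
        rw [he1]
        simp
      · have ht1 : 1 ≤ t := hpos
        have htT' : t ≤ T := by omega
        have h1 := ih ht1 (by omega)
        have h2 : ‖x i t - xstar t‖ ≤ M i :=
          hMle i t (Finset.mem_Icc.mpr ⟨ht1, htT'⟩)
        calc ‖x (i + 1) (t + 1) - xstar (t + 1)‖
            ≤ ‖x (i + 1) t - xstar t‖ + δ * ‖x i t - xstar t‖ := hstep i t
          _ ≤ δ * ((t : ℝ) - 1) * M i + δ * M i := by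
              have h3 := mul_le_mul_of_nonneg_left h2 hδ
              linarith
          _ = δ * (((t : ℕ) + 1 : ℝ) - 1) * M i := by ring
          _ = δ * ((((t + 1 : ℕ)) : ℝ) - 1) * M i := by push_cast; ring
  have part1 : ∀ i, ∀ t ∈ Finset.Icc 1 T,
      ‖x (i + 1) t - xstar t‖ ≤ δ * ((T : ℝ) - 1) * M i := by
    intro i t ht
    rw [Finset.mem_Icc] at ht
    refine le_trans (key i t ht.1 ht.2) ?_
    have : ((t : ℝ) - 1) ≤ ((T : ℝ) - 1) := by
      have : (t : ℝ) ≤ (T : ℝ) := by exact_mod_cast ht.2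
      linarith
    have := mul_le_mul_of_nonneg_right (mul_le_mul_of_nonneg_left this hδ) (hM0 i)
    linarith
  refine ⟨part1, ?_⟩
  -- convergence
  have hMrec : ∀ i, M (i + 1) ≤ δ * ((T : ℝ) - 1) * M i := by
    intro i
    exact (Finset.sup'_le_iff hne _).mpr (fun t ht => part1 i t ht)
  have hMgeom : ∀ i, M i ≤ (δ * ((T : ℝ) - 1)) ^ i * M 0 := by
    intro i
    induction i with
    | zero => simp
    | succ i ih =>
      calc M (i + 1) ≤ δ * ((T : ℝ) - 1) * M i := hMrec i
        _ ≤ δ * ((T : ℝ) - 1) * ((δ * ((T : ℝ) - 1)) ^ i * M 0) := by gcongr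
        _ = (δ * ((T : ℝ) - 1)) ^ (i + 1) * M 0 := by ring
  intro t ht
  have hbound : ∀ i, ‖x i t - xstar t‖ ≤ (δ * ((T : ℝ) - 1)) ^ i * M 0 :=
    fun i => le_trans (hMle i t ht) (hMgeom i)
  have htend0 : Filter.Tendsto (fun i => (δ * ((T : ℝ) - 1)) ^ i * M 0)
      Filter.atTop (nhds 0) := by
    have := tendsto_pow_atTop_nhds_zero_of_lt_one hr0 hcontr
    simpa using this.mul_const (M 0)
  have hsq : Filter.Tendsto (fun i => x i t - xstar t) Filter.atTop (nhds 0) :=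
    squeeze_zero_norm hbound htend0
  have := hsq.add_const (xstar t)
  simpa using this
end
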